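/- Let S be a left I-order in a primitive inverse semigroup Q with zero. Then for a, b ∈ S, a R b in Q if and only if a R* b in S. -/

import Mathlib

/-- An inverse semigroup structure on a semigroup with zero, given by an inverse map. -/
def IsInverseSemigroup (Q : Type*) [SemigroupWithZero Q] (inv : Q → Q) : Prop :=
  (∀ a : Q, a * inv a * a = a) ∧ (∀ a : Q, inv a * a * inv a = inv a) ∧
  (∀ e f : Q, e * e = e → f * f = f → e * f = f * e)

/-- A primitive inverse semigroup: all nonzero idempotents are primitive. -/
def IsPrimitiveInvSemigroup (Q : Type*) [SemigroupWithZero Q] (inv : Q → Q) : Prop :=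
  IsInverseSemigroup Q inv ∧
  ∀ e : Q, e * e = e → e ≠ 0 →
    ∀ f : Q, f * f = f → e * f = f → f * e = f → f = 0 ∨ f = e

/-- Green's R relation (via Q¹). -/
def GreenR {Q : Type*} [SemigroupWithZero Q] (a b : Q) : Prop :=
  a = b ∨ ∃ u v : Q, a * u = b ∧ b * v = a

/-- Green's L relation (via Q¹). -/
def GreenL {Q : Type*} [SemigroupWithZero Q] (a b : Q) : Prop :=
  a = b ∨ ∃ u v : Q, u * a = b ∧ v * b = a

/-- Categorical at 0. -/
def CategoricalAtZero (S : Type*) [SemigroupWithZero S] : Prop :=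
  ∀ a b c : S, a * b ≠ 0 → b * c ≠ 0 → a * b * c ≠ 0

/-- 0-cancellative. -/
def ZeroCancellative (S : Type*) [SemigroupWithZero S] : Prop :=
  (∀ a b c : S, a * b = a * c → a * b ≠ 0 → b = c) ∧
  (∀ a b c : S, b * a = c * a → b * a ≠ 0 → b = c)

/-- The relation R* on a semigroup, defined via S¹ = WithOne S. -/
def RStar {S : Type*} [SemigroupWithZero S] (a b : S) : Prop :=
  ∀ x y : WithOne S, x * (a : WithOne S) = y * (a : WithOne S) ↔
    x * (b : WithOne S) = y * (b : WithOne S)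

/-- The relation λ on a whole semigroup with zero. -/
def Lam {S : Type*} [SemigroupWithZero S] (a b : S) : Prop :=
  (a = 0 ∧ b = 0) ∨ ∃ x y : S, x * a = y * b ∧ x * a ≠ 0

/-- The relation λ relative to a subset S of Q. -/
def LamOn {Q : Type*} [SemigroupWithZero Q] (S : Set Q) (a b : Q) : Prop :=
  (a = 0 ∧ b = 0) ∨ ∃ x ∈ S, ∃ y ∈ S, x * a = y * b ∧ x * a ≠ 0

/-- The relation ρ relative to a subset S of Q. -/
def RhoOn {Q : Type*} [SemigroupWithZero Q] (S : Set Q) (a b : Q) : Prop :=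
  (a = 0 ∧ b = 0) ∨ ∃ x ∈ S, ∃ y ∈ S, a * x = b * y ∧ a * x ≠ 0

/-- The relation R* on a subset S of Q, defined via S¹. -/
def RStarOn {Q : Type*} [SemigroupWithZero Q] (S : Set Q) (a b : Q) : Prop :=
  (∀ x ∈ S, ∀ y ∈ S, (x * a = y * a ↔ x * b = y * b)) ∧
  (∀ x ∈ S, (x * a = a ↔ x * b = b)) ∧
  (∀ y ∈ S, (a = y * a ↔ b = y * b))

/-- S is a subsemigroup of Q. -/
def IsSubsemigroup {Q : Type*} [SemigroupWithZero Q] (S : Set Q) : Prop :=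
  ∀ a ∈ S, ∀ b ∈ S, a * b ∈ S

/-- S is a left I-order in Q (with respect to the inverse map `inv`). -/
def IsLeftIOrder {Q : Type*} [SemigroupWithZero Q] (S : Set Q) (inv : Q → Q) : Prop :=
  IsSubsemigroup S ∧ ∀ q : Q, ∃ a ∈ S, ∃ b ∈ S, q = inv a * b

/-!
If `a R* b` in `S`, then `a` and `b` have the same left annihilators in `S`: if `c * b = 0`, then
`(x * c) * b = c * b` for every `x ∈ S`, hence `x * (c * a) = c * a`, and an element fixed by all
of `S` is `0` because `0 = c'⁻¹ * d'` with `c', d' ∈ S`. A nonzero `q = c⁻¹ * d` satisfies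
`q = c⁻¹ * (c * q)`, so some `c ∈ S` has `c * q ≠ 0`. By primitivity, `c * a ≠ 0` forces
`c⁻¹ * c = a * a⁻¹`; a common such `c` for `a` and `b` gives `a * a⁻¹ = b * b⁻¹`, i.e. `a R b`.
-/

section

variable {Q : Type*} [SemigroupWithZero Q] {inv : Q → Q} {S : Set Q}

theorem GreenR.rStarOn {a b : Q} (h : GreenR a b) : RStarOn S a b := by
  rcases h with rfl | ⟨u, v, rfl, hv⟩
  · exact ⟨fun _ _ _ _ => Iff.rfl, fun _ _ => Iff.rfl, fun _ _ => Iff.rfl⟩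
  refine ⟨fun x _ y _ => ⟨fun h => ?_, fun h => ?_⟩, fun x _ => ⟨fun h => ?_, fun h => ?_⟩,
    fun y _ => ⟨fun h => ?_, fun h => ?_⟩⟩
  · rw [← mul_assoc, h, mul_assoc]
  · rw [← hv, ← mul_assoc, h, mul_assoc]
  · rw [← mul_assoc, h]
  · rw [← hv, ← mul_assoc, h]
  · rw [← mul_assoc, ← h]
  · rw [← hv, ← mul_assoc, ← h]

theorem RStarOn.symm {a b : Q} (h : RStarOn S a b) : RStarOn S b a :=
  ⟨fun x hx y hy => (h.1 x hx y hy).symm, fun x hx => (h.2.1 x hx).symm,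
    fun y hy => (h.2.2 y hy).symm⟩

theorem RStarOn.mul_mul_eq_of_mul_eq_zero (hS : IsSubsemigroup S) {a b c x : Q}
    (h : RStarOn S a b) (hc : c ∈ S) (hx : x ∈ S) (hcb : c * b = 0) :
    x * (c * a) = c * a := by
  rw [← mul_assoc]
  exact (h.1 (x * c) (hS x hx c hc) c hc).mpr (by rw [mul_assoc, hcb, mul_zero])

namespace IsInverseSemigroup

variable (hQ : IsInverseSemigroup Q inv)
include hQ

theorem isIdempotentElem_mul_inv (a : Q) : IsIdempotentElem (a * inv a) := by
  rw [IsIdempotentElem, ← mul_assoc, hQ.1 a]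

theorem isIdempotentElem_inv_mul (a : Q) : IsIdempotentElem (inv a * a) := by
  rw [IsIdempotentElem, mul_assoc, ← mul_assoc a, hQ.1 a]

theorem greenR_of_mul_inv_eq {a b : Q} (h : a * inv a = b * inv b) : GreenR a b :=
  Or.inr ⟨inv a * b, inv b * a, by rw [← mul_assoc, h, hQ.1 b], by rw [← mul_assoc, ← h, hQ.1 a]⟩

end IsInverseSemigroup

namespace IsLeftIOrder

variable (hS : IsLeftIOrder S inv) (hQ : IsInverseSemigroup Q inv)
include hS hQ

theorem eq_zero_of_forall_mul_eq_self {b : Q} (hb : ∀ x ∈ S, x * b = b) : b = 0 := by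
  obtain ⟨c, hc, d, hd, h0⟩ := hS.2 0
  calc b = c * inv c * c * b := by rw [hQ.1 c, hb c hc]
    _ = c * inv c * (d * b) := by rw [mul_assoc, hb c hc, hb d hd]
    _ = 0 := by rw [mul_assoc c, ← mul_assoc (inv c), ← h0, zero_mul, mul_zero]

theorem exists_mem_mul_ne_zero {q : Q} (hq : q ≠ 0) : ∃ c ∈ S, c * q ≠ 0 := by
  obtain ⟨c, hc, d, -, rfl⟩ := hS.2 q
  refine ⟨c, hc, fun h => hq ?_⟩
  rw [← hQ.2.1 c, mul_assoc, mul_assoc, h, mul_zero]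

theorem mul_eq_zero_of_rStarOn {a b c : Q} (h : RStarOn S a b) (hc : c ∈ S)
    (hcb : c * b = 0) : c * a = 0 :=
  hS.eq_zero_of_forall_mul_eq_self hQ fun _ hx => h.mul_mul_eq_of_mul_eq_zero hS.1 hc hx hcb

end IsLeftIOrder

namespace IsPrimitiveInvSemigroup

variable (hQ : IsPrimitiveInvSemigroup Q inv)
include hQ

theorem eq_of_mul_ne_zero {e f : Q} (he : IsIdempotentElem e) (hf : IsIdempotentElem f)
    (hef : e * f ≠ 0) : e = f := by
  have hc : e * f = f * e := hQ.1.2.2 e f he hf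
  have hidem : (e * f) * (e * f) = e * f := by
    rw [mul_assoc, ← mul_assoc f, ← hc, mul_assoc, hf, ← mul_assoc, he]
  have he0 : e ≠ 0 := by rintro rfl; exact hef (zero_mul f)
  have hf0 : f ≠ 0 := by rintro rfl; exact hef (mul_zero e)
  obtain h | h := hQ.2 e he he0 (e * f) hidem (by rw [← mul_assoc, he])
    (by rw [hc, mul_assoc, he, ← hc])
  · exact absurd h hef
  obtain h' | h' := hQ.2 f hf hf0 (e * f) hidem (by rw [hc, ← mul_assoc, hf])
    (by rw [mul_assoc, hf])
  · exact absurd h' hef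
  exact h.symm.trans h'

theorem inv_mul_self_eq_of_mul_ne_zero {x y : Q} (h : x * y ≠ 0) : inv x * x = y * inv y := by
  refine hQ.eq_of_mul_ne_zero (hQ.1.isIdempotentElem_inv_mul x)
    (hQ.1.isIdempotentElem_mul_inv y) fun h0 => h ?_
  rw [← hQ.1.1 x, ← hQ.1.1 y, mul_assoc x, mul_assoc, ← mul_assoc (inv x * x), h0, zero_mul,
    mul_zero]

end IsPrimitiveInvSemigroup

end

theorem stmt_12 {Q : Type*} [SemigroupWithZero Q] (inv : Q → Q)
    (hQ : IsPrimitiveInvSemigroup Q inv) (S : Set Q)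
    (hS : IsLeftIOrder S inv) :
    ∀ a ∈ S, ∀ b ∈ S, (GreenR a b ↔ RStarOn S a b) := by
  intro a _ b _
  refine ⟨GreenR.rStarOn, fun hab => ?_⟩
  by_cases ha : a = 0
  · subst ha
    refine Or.inl (Eq.symm <| by_contra fun hb => ?_)
    obtain ⟨c, hc, hcb⟩ := hS.exists_mem_mul_ne_zero hQ.1 hb
    exact hcb (hS.mul_eq_zero_of_rStarOn hQ.1 hab.symm hc (mul_zero c))
  · obtain ⟨c, hc, hca⟩ := hS.exists_mem_mul_ne_zero hQ.1 ha
    have hcb : c * b ≠ 0 := fun hcb => hca (hS.mul_eq_zero_of_rStarOn hQ.1 hab hc hcb)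
    exact hQ.1.greenR_of_mul_inv_eq <|
      (hQ.inv_mul_self_eq_of_mul_ne_zero hca).symm.trans (hQ.inv_mul_self_eq_of_mul_ne_zero hcb)
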